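/- Let 1 < p ≤ 2. There exist constants 0 < c ≤ C, depending only on p, such that for every dimension d ≥ 1, every pair of relaxation parameters 0 < ε₋ ≤ ε₊ < ∞, and all vectors P, Q ∈ ℝ^d one has c · clamp(max(|P|,|Q|))^{p-2} · |P − Q|² ≤ |V_ε(P) − V_ε(Q)|² ≤ C · clamp(max(|P|,|Q|))^{p-2} · |P − Q|². -/

import Mathlib

/-!
Write `γ = (2 - p) / 2` and, for `‖Q‖ ≤ ‖P‖`, let `s ≥ t` be the clamped norms of `P` and `Q`.
Then `V(P) - V(Q) = s^(-γ) • (P - r • Q)` with `r = (s / t)^γ ≥ 1`. Bernoulli's inequality gives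
`(r - 1) t ≤ γ (s - t)`; since clamping is monotone and 1-Lipschitz, and `‖Q‖ ≤ t` unless both norms
are clamped to `ε₊` (where `r = 1`), the defect `‖(r - 1) • Q‖` is at most `γ ‖P - Q‖`. So
`‖P - r • Q‖` lies between `(1 - γ) ‖P - Q‖ = (p / 2) ‖P - Q‖` and `(1 + γ) ‖P - Q‖`, and squaring
with `s^(-2γ) = clamp(max ‖P‖ ‖Q‖)^(p - 2)` gives `c = (p / 2)²`, `C = (2 - p / 2)²`.
-/

open Real

def clamp (a b x : ℝ) : ℝ := max a (min x b)

namespace clamp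

variable {a b x y : ℝ}

lemma pos (ha : 0 < a) : 0 < clamp a b x := ha.trans_le (le_max_left _ _)

lemma mono (h : y ≤ x) : clamp a b y ≤ clamp a b x :=
  max_le_max le_rfl (min_le_min h le_rfl)

lemma sub_le_sub (h : y ≤ x) : clamp a b x - clamp a b y ≤ x - y := by
  unfold clamp
  rcases le_total x b with hx | hx <;> rcases le_total y b with hy | hy <;>
    simp only [min_eq_left, min_eq_right, hx, hy] <;> grind

lemma eq_right_of_le (hab : a ≤ b) (hx : b ≤ x) : clamp a b x = b := by
  rw [clamp, min_eq_right hx, max_eq_right hab]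

lemma le_clamp (hx : x ≤ b) : x ≤ clamp a b x := by
  rw [clamp, min_eq_left hx]; exact le_max_right _ _

end clamp

lemma rpow_div_sub_one_mul_le {s t γ : ℝ} (ht : 0 < t) (hts : t ≤ s) (hγ0 : 0 ≤ γ) (hγ1 : γ ≤ 1) :
    ((s / t) ^ γ - 1) * t ≤ γ * (s - t) := by
  have h := rpow_one_add_le_one_add_mul_self (s := s / t - 1)
    (by linarith [div_nonneg (ht.le.trans hts) ht.le]) hγ0 hγ1
  rw [add_sub_cancel] at h
  calc ((s / t) ^ γ - 1) * t ≤ γ * (s / t - 1) * t := by gcongr; linarith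
    _ = γ * (s - t) := by field_simp

lemma clamp_rpow_div_sub_one_mul_le {a b x y γ : ℝ} (ha : 0 < a) (hab : a ≤ b) (hyx : y ≤ x)
    (hγ0 : 0 ≤ γ) (hγ1 : γ ≤ 1) :
    ((clamp a b x / clamp a b y) ^ γ - 1) * y ≤ γ * (x - y) := by
  rcases le_total b y with hby | hyb
  · rw [clamp.eq_right_of_le hab hby, clamp.eq_right_of_le hab (hby.trans hyx),
      div_self (by linarith), one_rpow, sub_self, zero_mul]
    exact mul_nonneg hγ0 (by linarith)
  have ht := clamp.pos (b := b) (x := y) ha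
  have hts := clamp.mono (a := a) (b := b) hyx
  calc ((clamp a b x / clamp a b y) ^ γ - 1) * y
        ≤ ((clamp a b x / clamp a b y) ^ γ - 1) * clamp a b y := by
        gcongr
        · exact sub_nonneg.2 (one_le_rpow ((one_le_div ht).2 hts) hγ0)
        · exact clamp.le_clamp hyb
    _ ≤ γ * (clamp a b x - clamp a b y) := rpow_div_sub_one_mul_le ht hts hγ0 hγ1
    _ ≤ γ * (x - y) := mul_le_mul_of_nonneg_left (clamp.sub_le_sub hyx) hγ0

section
variable {E : Type*} [NormedAddCommGroup E] [NormedSpace ℝ E]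

lemma norm_sub_smul_le_and_le {P Q : E} {r γ : ℝ} (h : ‖(r - 1) • Q‖ ≤ γ * ‖P - Q‖) :
    (1 - γ) * ‖P - Q‖ ≤ ‖P - r • Q‖ ∧ ‖P - r • Q‖ ≤ (1 + γ) * ‖P - Q‖ := by
  have hsplit : P - r • Q = (P - Q) - (r - 1) • Q := by rw [sub_smul, one_smul]; abel
  rw [hsplit]
  constructor
  · linarith [norm_sub_norm_le (P - Q) ((r - 1) • Q)]
  · linarith [norm_sub_le (P - Q) ((r - 1) • Q)]

variable {p a b : ℝ}

lemma norm_rpow_smul_sq {s : ℝ} (hs : 0 < s) (X : E) :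
    ‖s ^ ((p - 2) / 2) • X‖ ^ 2 = s ^ (p - 2) * ‖X‖ ^ 2 := by
  rw [norm_smul, mul_pow, norm_of_nonneg (rpow_nonneg hs.le _), ← rpow_natCast, ← rpow_mul hs.le]
  norm_num

lemma rpow_smul_sub_rpow_smul_eq {s t : ℝ} (hs : 0 < s) (ht : 0 < t) (P Q : E) :
    s ^ ((p - 2) / 2) • P - t ^ ((p - 2) / 2) • Q
      = s ^ ((p - 2) / 2) • (P - (s / t) ^ ((2 - p) / 2) • Q) := by
  have h : s ^ ((p - 2) / 2) * (s / t) ^ ((2 - p) / 2) = t ^ ((p - 2) / 2) := by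
    rw [div_rpow hs.le ht.le, show (p - 2) / 2 = -((2 - p) / 2) by ring, rpow_neg hs.le,
      rpow_neg ht.le]
    field_simp [(rpow_pos_of_pos hs ((2 - p) / 2)).ne']
  rw [smul_sub, smul_smul, h]

lemma sq_norm_clamp_rpow_smul_sub_le_and_le_of_norm_le (hp0 : 0 ≤ p) (hp2 : p ≤ 2) (ha : 0 < a)
    (hab : a ≤ b) {P Q : E} (hQP : ‖Q‖ ≤ ‖P‖) :
    (p / 2) ^ 2 * clamp a b ‖P‖ ^ (p - 2) * ‖P - Q‖ ^ 2
        ≤ ‖clamp a b ‖P‖ ^ ((p - 2) / 2) • P - clamp a b ‖Q‖ ^ ((p - 2) / 2) • Q‖ ^ 2 ∧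
      ‖clamp a b ‖P‖ ^ ((p - 2) / 2) • P - clamp a b ‖Q‖ ^ ((p - 2) / 2) • Q‖ ^ 2
        ≤ (2 - p / 2) ^ 2 * clamp a b ‖P‖ ^ (p - 2) * ‖P - Q‖ ^ 2 := by
  have hs := clamp.pos (b := b) (x := ‖P‖) ha
  have ht := clamp.pos (b := b) (x := ‖Q‖) ha
  rw [rpow_smul_sub_rpow_smul_eq hs ht, norm_rpow_smul_sq hs]
  set r := (clamp a b ‖P‖ / clamp a b ‖Q‖) ^ ((2 - p) / 2)
  have hr : ‖(r - 1) • Q‖ ≤ (2 - p) / 2 * ‖P - Q‖ := by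
    have hr1 : 1 ≤ r := one_le_rpow ((one_le_div ht).2 (clamp.mono hQP)) (by linarith)
    rw [norm_smul, norm_of_nonneg (by linarith)]
    calc (r - 1) * ‖Q‖ ≤ (2 - p) / 2 * (‖P‖ - ‖Q‖) :=
          clamp_rpow_div_sub_one_mul_le ha hab hQP (by linarith) (by linarith)
      _ ≤ (2 - p) / 2 * ‖P - Q‖ :=
          mul_le_mul_of_nonneg_left (norm_sub_norm_le P Q) (by linarith)
  obtain ⟨hlow, hupp⟩ := norm_sub_smul_le_and_le hr
  have hc := rpow_nonneg hs.le (p - 2)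
  have hlow2 := mul_le_mul_of_nonneg_left
    (pow_le_pow_left₀ (by positivity) (show p / 2 * ‖P - Q‖ ≤ ‖P - r • Q‖ by linarith) 2) hc
  have hupp2 := mul_le_mul_of_nonneg_left (pow_le_pow_left₀ (norm_nonneg _)
    (show ‖P - r • Q‖ ≤ (2 - p / 2) * ‖P - Q‖ by linarith) 2) hc
  rw [mul_pow] at hlow2 hupp2
  constructor <;> linarith

lemma sq_norm_clamp_rpow_smul_sub_le_and_le (hp0 : 0 ≤ p) (hp2 : p ≤ 2) (ha : 0 < a)
    (hab : a ≤ b) (P Q : E) :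
    (p / 2) ^ 2 * clamp a b (max ‖P‖ ‖Q‖) ^ (p - 2) * ‖P - Q‖ ^ 2
        ≤ ‖clamp a b ‖P‖ ^ ((p - 2) / 2) • P - clamp a b ‖Q‖ ^ ((p - 2) / 2) • Q‖ ^ 2 ∧
      ‖clamp a b ‖P‖ ^ ((p - 2) / 2) • P - clamp a b ‖Q‖ ^ ((p - 2) / 2) • Q‖ ^ 2
        ≤ (2 - p / 2) ^ 2 * clamp a b (max ‖P‖ ‖Q‖) ^ (p - 2) * ‖P - Q‖ ^ 2 := by
  wlog hQP : ‖Q‖ ≤ ‖P‖ generalizing P Q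
  · have h := this Q P (le_of_not_ge hQP)
    rwa [max_comm, norm_sub_rev Q P, norm_sub_rev (_ • Q)] at h
  rw [max_eq_left hQP]
  exact sq_norm_clamp_rpow_smul_sub_le_and_le_of_norm_le hp0 hp2 ha hab hQP

end

theorem stmt_1 (p : ℝ) (hp1 : 1 < p) (hp2 : p ≤ 2) :
    ∃ c C : ℝ, 0 < c ∧ c ≤ C ∧
      ∀ (d : ℕ), 1 ≤ d →
      ∀ εm εp : ℝ, 0 < εm → εm ≤ εp →
      ∀ P Q : EuclideanSpace ℝ (Fin d),
        c * (max εm (min (max ‖P‖ ‖Q‖) εp)) ^ (p - 2) * ‖P - Q‖ ^ 2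
            ≤ ‖(max εm (min ‖P‖ εp)) ^ ((p - 2)/2) • P
                - (max εm (min ‖Q‖ εp)) ^ ((p - 2)/2) • Q‖ ^ 2 ∧
        ‖(max εm (min ‖P‖ εp)) ^ ((p - 2)/2) • P
            - (max εm (min ‖Q‖ εp)) ^ ((p - 2)/2) • Q‖ ^ 2
          ≤ C * (max εm (min (max ‖P‖ ‖Q‖) εp)) ^ (p - 2) * ‖P - Q‖ ^ 2 := by
  refine ⟨(p / 2) ^ 2, (2 - p / 2) ^ 2, by positivity,
    pow_le_pow_left₀ (by positivity) (by linarith) 2,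
    fun _ _ _ _ hεm hε P Q => sq_norm_clamp_rpow_smul_sub_le_and_le (by linarith) hp2 hεm hε P Q⟩
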